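/- Let a ∈ C^∞(𝕋) and s ∈ ℝ. Let G be the operator Gu = a·(u − ∫_𝕋 a(y)u(y)dy) (with ∫ a = 1). Then the commutator [(1−∂_x²)^{s/2}, G] is bounded from H^{s−1}(𝕋) to L²(𝕋): there exists C > 0 such that ‖[(1−∂_x²)^{s/2}, G]u‖_{L²(𝕋)} ≤ C‖u‖_{H^{s−1}(𝕋)}. -/

import Mathlib

/-!
Write `⟨x⟩ = √(1 + x²)`. On the Fourier side the commutator is the sequence
`Σₖ â(n - k) (⟨n⟩ˢ - ⟨k⟩ˢ) û(k)` plus two rank-one terms coming from `∫ a u`.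
By the mean value theorem and Peetre's inequality `⟨x⟩ᵗ ≤ (√2 ⟨x - y⟩)^|t| ⟨y⟩ᵗ`,
`|⟨n⟩ˢ - ⟨k⟩ˢ| ≲ ⟨n - k⟩^(1 + |s - 1|) ⟨k⟩^(s - 1)`: one derivative is gained, and the price is
paid by the rapid decay of `â`. The main term is then the convolution of a summable sequence with
`⟨k⟩^(s - 1) |û(k)| ∈ ℓ²`, controlled by Young's inequality `ℓ¹ * ℓ² → ℓ²`. The rank-one terms are
bounded because `⟨k⟩^(s - 1) |û(k)| ≤ ‖u‖_{H^(s-1)}` pointwise, while every weighted `ℓ¹` norm of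
`â` is finite.
-/

noncomputable section
open scoped Real ComplexConjugate

/-- Fourier coefficients of the product `a·u`, where `ah` are the Fourier
coefficients of `a`: `(a u)^(n) = Σ_k ah (n-k) u k`. -/
def aconv (ah u : ℤ → ℂ) (n : ℤ) : ℂ := ∑' k : ℤ, ah (n - k) * u k

/-- The integral `∫_𝕋 a u dx = 2π Σ_k ah (-k) u k`. -/
def intAU (ah u : ℤ → ℂ) : ℂ := 2 * π * ∑' k : ℤ, ah (-k) * u k

/-- Fourier coefficients of `G u = a (u - ∫_𝕋 a u dy)`. -/
def Gcoef (ah u : ℤ → ℂ) (n : ℤ) : ℂ := aconv ah u n - intAU ah u * ah n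

/-- Fourier coefficients of the Bessel potential `(1-∂_x²)^{s/2} u`. -/
def Jpow (s : ℝ) (u : ℤ → ℂ) (n : ℤ) : ℂ := ((1 + (n : ℝ) ^ 2) ^ (s / 2) : ℝ) * u n

/-- The squared `H^s(𝕋)` norm through Fourier coefficients. -/
def hNormSq (s : ℝ) (u : ℤ → ℂ) : ℝ :=
  2 * π * ∑' k : ℤ, (1 + (k : ℝ) ^ 2) ^ s * ‖u k‖ ^ 2

lemma abs_rpow_sub_rpow_le (p : ℝ) {a b : ℝ} (ha : 0 < a) (hb : 0 < b) :
    |a ^ p - b ^ p| ≤ |p| * (a ^ (p - 1) + b ^ (p - 1)) * |a - b| := by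
  have hpos : ∀ c ∈ Set.uIcc a b, 0 < c := fun c hc => (lt_min ha hb).trans_le hc.1
  refine (convex_uIcc a b).norm_image_sub_le_of_norm_hasDerivWithin_le
    (f := fun c => c ^ p) (fun c hc => (Real.hasDerivAt_rpow_const
      (Or.inl (hpos c hc).ne')).hasDerivWithinAt) (fun c hc => ?_)
    Set.right_mem_uIcc Set.left_mem_uIcc
  have hc' : min a b ≤ c ∧ c ≤ max a b := hc
  rw [norm_mul, Real.norm_eq_abs, Real.norm_of_nonneg (Real.rpow_pos_of_pos (hpos c hc) _).le]
  refine mul_le_mul_of_nonneg_left ?_ (abs_nonneg p)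
  have ha' := Real.rpow_pos_of_pos ha (p - 1)
  have hb' := Real.rpow_pos_of_pos hb (p - 1)
  -- `c ^ (p - 1)` is monotone in `c`, so it is dominated by its value at `min a b` or `max a b`.
  rcases le_or_gt 0 (p - 1) with hp | hp
  · have := Real.rpow_le_rpow (hpos c hc).le hc'.2 hp
    rcases max_choice a b with h | h <;> rw [h] at this <;> linarith
  · have := Real.rpow_le_rpow_of_nonpos (lt_min ha hb) hc'.1 hp.le
    rcases min_choice a b with h | h <;> rw [h] at this <;> linarith

def japaneseBracket (x : ℝ) : ℝ := √(1 + x ^ 2)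

section JapaneseBracket

variable (x y : ℝ)

lemma sq_japaneseBracket : japaneseBracket x ^ 2 = 1 + x ^ 2 :=
  Real.sq_sqrt (by positivity)

lemma one_le_japaneseBracket : 1 ≤ japaneseBracket x :=
  Real.one_le_sqrt.2 (by nlinarith [sq_nonneg x])

lemma japaneseBracket_pos : 0 < japaneseBracket x :=
  one_pos.trans_le (one_le_japaneseBracket x)

lemma abs_le_japaneseBracket : |x| ≤ japaneseBracket x :=
  Real.abs_le_sqrt (by linarith)

lemma japaneseBracket_neg : japaneseBracket (-x) = japaneseBracket x := by
  simp [japaneseBracket]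

lemma japaneseBracket_sub_comm : japaneseBracket (x - y) = japaneseBracket (y - x) := by
  rw [← neg_sub, japaneseBracket_neg]

lemma japaneseBracket_rpow (t : ℝ) : japaneseBracket x ^ t = (1 + x ^ 2) ^ (t / 2) := by
  rw [japaneseBracket, Real.sqrt_eq_rpow, ← Real.rpow_mul (by positivity)]
  ring_nf

lemma sq_japaneseBracket_rpow (t : ℝ) : (japaneseBracket x ^ t) ^ 2 = (1 + x ^ 2) ^ t := by
  rw [japaneseBracket_rpow, ← Real.rpow_mul_natCast (by positivity)]
  ring_nf

lemma abs_japaneseBracket_sub_le : |japaneseBracket x - japaneseBracket y| ≤ |x - y| := by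
  have hx := sq_japaneseBracket x
  have hy := sq_japaneseBracket y
  have hx' := abs_le_japaneseBracket x
  have hy' := abs_le_japaneseBracket y
  have hpos := add_pos (japaneseBracket_pos x) (japaneseBracket_pos y)
  -- `(⟨x⟩ - ⟨y⟩)(⟨x⟩ + ⟨y⟩) = (x - y)(x + y)` and `|x + y| ≤ ⟨x⟩ + ⟨y⟩`
  have key : |japaneseBracket x - japaneseBracket y| * (japaneseBracket x + japaneseBracket y)
      ≤ |x - y| * (japaneseBracket x + japaneseBracket y) := by
    rw [← abs_of_pos hpos, ← abs_mul, abs_of_pos hpos,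
      show (japaneseBracket x - japaneseBracket y) * (japaneseBracket x + japaneseBracket y)
        = (x - y) * (x + y) by nlinarith, abs_mul]
    exact mul_le_mul_of_nonneg_left ((abs_add_le x y).trans (add_le_add hx' hy')) (abs_nonneg _)
  exact le_of_mul_le_mul_right key hpos

lemma japaneseBracket_add_le :
    japaneseBracket (x + y) ≤ √2 * japaneseBracket x * japaneseBracket y := by
  rw [japaneseBracket, japaneseBracket, japaneseBracket, ← Real.sqrt_mul (by norm_num),
    ← Real.sqrt_mul (by positivity)]
  exact Real.sqrt_le_sqrt (by nlinarith [sq_nonneg (x - y), sq_nonneg (x * y), sq_nonneg (x + y)])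

/-- Peetre's inequality. -/
lemma japaneseBracket_rpow_le (t : ℝ) :
    japaneseBracket x ^ t ≤ (√2 * japaneseBracket (x - y)) ^ |t| * japaneseBracket y ^ t := by
  have hc : 0 < √2 * japaneseBracket (x - y) := mul_pos (by positivity) (japaneseBracket_pos _)
  rcases le_or_gt 0 t with ht | ht
  · rw [abs_of_nonneg ht, ← Real.mul_rpow hc.le (japaneseBracket_pos y).le]
    refine Real.rpow_le_rpow (japaneseBracket_pos x).le ?_ ht
    simpa using japaneseBracket_add_le (x - y) y
  · rw [abs_of_neg ht, Real.rpow_neg hc.le, ← div_eq_inv_mul,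
      le_div_iff₀ (Real.rpow_pos_of_pos hc _), ← Real.mul_rpow (japaneseBracket_pos x).le hc.le]
    refine Real.rpow_le_rpow_of_nonpos (japaneseBracket_pos y) ?_ ht.le
    have := japaneseBracket_add_le (y - x) x
    rw [sub_add_cancel, japaneseBracket_sub_comm] at this
    linarith

end JapaneseBracket

lemma abs_japaneseBracket_rpow_sub_le (s x y : ℝ) :
    |japaneseBracket x ^ s - japaneseBracket y ^ s| ≤
      |s| * (1 + √2 ^ |s - 1|) * japaneseBracket (x - y) ^ (1 + |s - 1|) *
        japaneseBracket y ^ (s - 1) := by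
  set d := japaneseBracket (x - y)
  have hd := one_le_japaneseBracket (x - y)
  have hy := Real.rpow_pos_of_pos (japaneseBracket_pos y) (s - 1)
  have hpeetre :
      japaneseBracket x ^ (s - 1) ≤ √2 ^ |s - 1| * d ^ |s - 1| * japaneseBracket y ^ (s - 1) := by
    rw [← Real.mul_rpow (by positivity) (by linarith)]
    exact japaneseBracket_rpow_le x y (s - 1)
  have hlip : |japaneseBracket x - japaneseBracket y| ≤ d :=
    (abs_japaneseBracket_sub_le x y).trans (abs_le_japaneseBracket _)
  have hdpow : 1 ≤ d ^ |s - 1| := Real.one_le_rpow hd (abs_nonneg _)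
  calc |japaneseBracket x ^ s - japaneseBracket y ^ s|
      ≤ |s| * (japaneseBracket x ^ (s - 1) + japaneseBracket y ^ (s - 1)) * d :=
        (abs_rpow_sub_rpow_le s (japaneseBracket_pos x) (japaneseBracket_pos y)).trans
          (mul_le_mul_of_nonneg_left hlip (mul_nonneg (abs_nonneg s)
            (add_pos (Real.rpow_pos_of_pos (japaneseBracket_pos x) _) hy).le))
    _ ≤ |s| * ((√2 ^ |s - 1| + 1) * d ^ |s - 1| * japaneseBracket y ^ (s - 1)) * d := by
        gcongr
        nlinarith
    _ = _ := by
        rw [Real.rpow_add (by linarith), Real.rpow_one]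
        ring

section SquareSummable

variable {ι : Type*}

/-- Cauchy–Schwarz with weights. -/
lemma sq_tsum_mul_le {w f : ι → ℝ} (hw0 : ∀ i, 0 ≤ w i) (hf0 : ∀ i, 0 ≤ f i)
    (hw : Summable w) (hwf : Summable fun i => w i * f i ^ 2) :
    (∑' i, w i * f i) ^ 2 ≤ (∑' i, w i) * ∑' i, w i * f i ^ 2 := by
  have hsq : ∀ i, √(w i) ^ (2 : ℝ) = w i := fun i => by
    rw [Real.rpow_two, Real.sq_sqrt (hw0 i)]
  have hsq' : ∀ i, (√(w i) * f i) ^ (2 : ℝ) = w i * f i ^ 2 := fun i => by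
    rw [Real.rpow_two, mul_pow, Real.sq_sqrt (hw0 i)]
  have h := Real.inner_le_Lp_mul_Lq_tsum_of_nonneg Real.HolderConjugate.two_two
    (f := fun i => √(w i)) (g := fun i => √(w i) * f i) (fun i => Real.sqrt_nonneg _)
    (fun i => mul_nonneg (Real.sqrt_nonneg _) (hf0 i))
    (by simpa only [hsq] using hw) (by simpa only [hsq'] using hwf)
  simp only [hsq, hsq', ← mul_assoc, Real.mul_self_sqrt (hw0 _)] at h
  calc (∑' i, w i * f i) ^ 2
      ≤ ((∑' i, w i) ^ (1 / 2 : ℝ) * (∑' i, w i * f i ^ 2) ^ (1 / 2 : ℝ)) ^ 2 :=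
        pow_le_pow_left₀ (tsum_nonneg fun i => mul_nonneg (hw0 i) (hf0 i)) h 2
    _ = _ := by
        rw [mul_pow, ← Real.sqrt_eq_rpow, ← Real.sqrt_eq_rpow,
          Real.sq_sqrt (tsum_nonneg hw0),
          Real.sq_sqrt (tsum_nonneg fun i => mul_nonneg (hw0 i) (sq_nonneg _))]

lemma summable_and_tsum_sq_le_sq_tsum {f : ι → ℝ} (hf0 : ∀ i, 0 ≤ f i) (hf : Summable f) :
    (Summable fun i => f i ^ 2) ∧ ∑' i, f i ^ 2 ≤ (∑' i, f i) ^ 2 := by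
  have hle : ∀ i, f i ^ 2 ≤ (∑' j, f j) * f i := fun i =>
    by rw [sq]; exact mul_le_mul_of_nonneg_right (hf.le_tsum i fun j _ => hf0 j) (hf0 i)
  have hsum := hf.mul_left (∑' j, f j)
  refine ⟨hsum.of_nonneg_of_le (fun i => sq_nonneg _) hle, ?_⟩
  calc ∑' i, f i ^ 2 ≤ ∑' i, (∑' j, f j) * f i :=
        (hsum.of_nonneg_of_le (fun i => sq_nonneg _) hle).tsum_le_tsum hle hsum
    _ = (∑' i, f i) ^ 2 := by rw [tsum_mul_left, sq]

end SquareSummable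

section Convolution

variable {G : Type*} [AddCommGroup G] {b v : G → ℝ}

/-- Young's inequality `ℓ¹ * ℓ² → ℓ²`. -/
lemma summable_and_tsum_conv_sq_le (hb0 : ∀ m, 0 ≤ b m) (hv0 : ∀ k, 0 ≤ v k)
    (hb : Summable b) (hv : Summable fun k => v k ^ 2) :
    (Summable fun n => (∑' k, b (n - k) * v k) ^ 2) ∧
      ∑' n, (∑' k, b (n - k) * v k) ^ 2 ≤ (∑' m, b m) ^ 2 * ∑' k, v k ^ 2 := by
  set B := ∑' m, b m
  have hbB : ∀ m, b m ≤ B := fun m => hb.le_tsum m fun j _ => hb0 j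
  have hrow : ∀ n, HasSum (fun k => b (n - k)) B := fun n =>
    (Equiv.subLeft n).hasSum_iff.2 hb.hasSum
  have hcol : ∀ k, HasSum (fun n => b (n - k) * v k ^ 2) (B * v k ^ 2) := fun k =>
    ((Equiv.subRight k).hasSum_iff.2 hb.hasSum).mul_right _
  set F : G → G → ℝ := fun k n => b (n - k) * v k ^ 2
  have hF0 : ∀ k n, 0 ≤ F k n := fun k n => mul_nonneg (hb0 _) (sq_nonneg _)
  have hFrow : ∀ n, Summable fun k => F k n := fun n =>
    (hv.mul_left B).of_nonneg_of_le (fun k => hF0 k n)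
      fun k => mul_le_mul_of_nonneg_right (hbB _) (sq_nonneg _)
  have hF : Summable (Function.uncurry F) := by
    refine (summable_prod_of_nonneg fun p => hF0 p.1 p.2).2 ⟨fun k => (hcol k).summable, ?_⟩
    exact (hv.mul_left B).congr fun k => (hcol k).tsum_eq.symm
  have hFsum : ∑' n, ∑' k, F k n = B * ∑' k, v k ^ 2 := by
    rw [hF.tsum_comm' (fun k => (hcol k).summable) hFrow]
    simp only [F, (hcol _).tsum_eq, tsum_mul_left]
  have hcs : ∀ n, (∑' k, b (n - k) * v k) ^ 2 ≤ B * ∑' k, F k n := fun n => by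
    simpa only [(hrow n).tsum_eq] using
      sq_tsum_mul_le (fun k => hb0 (n - k)) hv0 (hrow n).summable (hFrow n)
  have hmaj : Summable fun n => B * ∑' k, F k n := (hF.prod_symm.prod).mul_left B
  have hP := hmaj.of_nonneg_of_le (fun n => sq_nonneg _) hcs
  refine ⟨hP, ?_⟩
  calc ∑' n, (∑' k, b (n - k) * v k) ^ 2 ≤ ∑' n, B * ∑' k, F k n := hP.tsum_le_tsum hcs hmaj
    _ = B ^ 2 * ∑' k, v k ^ 2 := by rw [tsum_mul_left, hFsum]; ring

lemma tsum_sq_le_of_le_conv_add {c ρ : G → ℝ} (hb0 : ∀ m, 0 ≤ b m) (hv0 : ∀ k, 0 ≤ v k)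
    (hρ0 : ∀ n, 0 ≤ ρ n) (hb : Summable b) (hv : Summable fun k => v k ^ 2) (hρ : Summable ρ)
    (hc0 : ∀ n, 0 ≤ c n)
    (hc : ∀ n, c n ≤ ∑' k, b (n - k) * v k + √(∑' k, v k ^ 2) * ρ n) :
    ∑' n, c n ^ 2 ≤ 2 * ((∑' m, b m) ^ 2 + (∑' n, ρ n) ^ 2) * ∑' k, v k ^ 2 := by
  set V := ∑' k, v k ^ 2
  have hV : 0 ≤ V := tsum_nonneg fun k => sq_nonneg _
  obtain ⟨hP, hPle⟩ := summable_and_tsum_conv_sq_le hb0 hv0 hb hv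
  obtain ⟨hρ2, hρ2le⟩ := summable_and_tsum_sq_le_sq_tsum hρ0 hρ
  have hpt : ∀ n, c n ^ 2 ≤ 2 * (∑' k, b (n - k) * v k) ^ 2 + 2 * V * ρ n ^ 2 := fun n => by
    have := pow_le_pow_left₀ (hc0 n) (hc n) 2
    nlinarith [Real.sq_sqrt hV, sq_nonneg (∑' k, b (n - k) * v k - √V * ρ n)]
  have hmaj := (hP.mul_left 2).add (hρ2.mul_left (2 * V))
  calc ∑' n, c n ^ 2 ≤ ∑' n, (2 * (∑' k, b (n - k) * v k) ^ 2 + 2 * V * ρ n ^ 2) :=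
        (hmaj.of_nonneg_of_le (fun n => sq_nonneg _) hpt).tsum_le_tsum hpt hmaj
    _ = 2 * ∑' n, (∑' k, b (n - k) * v k) ^ 2 + 2 * V * ∑' n, ρ n ^ 2 := by
        rw [(hP.mul_left 2).tsum_add (hρ2.mul_left (2 * V)), tsum_mul_left, tsum_mul_left]
    _ ≤ 2 * ((∑' m, b m) ^ 2 * V) + 2 * V * (∑' n, ρ n) ^ 2 := by gcongr
    _ = _ := by ring

end Convolution

lemma summable_inv_one_add_sq : Summable fun k : ℤ => (1 + (k : ℝ) ^ 2)⁻¹ := by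
  refine (Real.summable_one_div_int_pow.2 one_lt_two).of_norm_bounded_eventually ?_
  filter_upwards [Filter.eventually_cofinite_ne 0] with k hk
  rw [Real.norm_of_nonneg (by positivity), one_div]
  exact inv_anti₀ (by positivity) (by linarith)

def IsRapidlyDecreasing {E : Type*} [Norm E] (f : ℤ → E) : Prop :=
  ∀ m : ℕ, ∃ C : ℝ, 0 < C ∧ ∀ l : ℤ, ‖f l‖ ≤ C * (1 + (l : ℝ) ^ 2) ^ (-(m : ℝ) / 2)

lemma IsRapidlyDecreasing.summable_rpow_mul_norm {E : Type*} [SeminormedAddGroup E] {f : ℤ → E}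
    (hf : IsRapidlyDecreasing f) (t : ℝ) :
    Summable fun l : ℤ => japaneseBracket l ^ t * ‖f l‖ := by
  obtain ⟨C, hC0, hC⟩ := hf ⌈t + 2⌉₊
  refine (summable_inv_one_add_sq.mul_left C).of_nonneg_of_le
    (fun l => mul_nonneg (Real.rpow_pos_of_pos (japaneseBracket_pos l) t).le (norm_nonneg _))
    fun l => ?_
  have hl := one_le_japaneseBracket l
  have hm : t + 2 ≤ (⌈t + 2⌉₊ : ℝ) := Nat.le_ceil _
  have hCl := hC l
  rw [← japaneseBracket_rpow] at hCl
  calc japaneseBracket l ^ t * ‖f l‖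
      ≤ japaneseBracket l ^ t * (C * japaneseBracket l ^ (-(⌈t + 2⌉₊ : ℝ))) :=
        mul_le_mul_of_nonneg_left hCl (Real.rpow_pos_of_pos (japaneseBracket_pos l) t).le
    _ = C * japaneseBracket l ^ (t - ⌈t + 2⌉₊) := by
        rw [Real.rpow_sub (japaneseBracket_pos l), Real.rpow_neg (japaneseBracket_pos l).le]
        ring
    _ ≤ C * japaneseBracket l ^ (-2 : ℝ) :=
        mul_le_mul_of_nonneg_left (Real.rpow_le_rpow_of_exponent_le hl (by linarith)) hC0.le
    _ = C * (1 + (l : ℝ) ^ 2)⁻¹ := by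
        rw [japaneseBracket_rpow]; norm_num [Real.rpow_neg_one]

lemma IsRapidlyDecreasing.summable_conv {f w : ℤ → ℂ} (hf : IsRapidlyDecreasing f) {M t : ℝ}
    (hw : ∀ k : ℤ, ‖w k‖ ≤ M * japaneseBracket k ^ t) (n : ℤ) :
    Summable fun k => f (n - k) * w k := by
  have hM : 0 ≤ M := nonneg_of_mul_nonneg_left ((norm_nonneg _).trans (hw 0))
    (Real.rpow_pos_of_pos (japaneseBracket_pos _) t)
  have hshift : Summable fun k : ℤ => japaneseBracket ((n - k : ℤ) : ℝ) ^ |t| * ‖f (n - k)‖ :=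
    (Equiv.subLeft n).summable_iff.2 (hf.summable_rpow_mul_norm |t|)
  refine Summable.of_norm ((hshift.mul_left (M * √2 ^ |t| * japaneseBracket n ^ t)).of_nonneg_of_le
    (fun k => norm_nonneg _) fun k => ?_)
  have hpeetre := japaneseBracket_rpow_le k n t
  rw [Real.mul_rpow (by positivity) (japaneseBracket_pos _).le, japaneseBracket_sub_comm] at hpeetre
  rw [norm_mul, Int.cast_sub]
  calc ‖f (n - k)‖ * ‖w k‖ ≤ ‖f (n - k)‖ * (M * japaneseBracket k ^ t) :=
        mul_le_mul_of_nonneg_left (hw k) (norm_nonneg _)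
    _ ≤ ‖f (n - k)‖ * (M * (√2 ^ |t| * japaneseBracket (n - k) ^ |t| * japaneseBracket n ^ t)) := by
        gcongr
    _ = _ := by ring

lemma norm_intAU_le {ah w : ℤ → ℂ} {M t : ℝ}
    (hah : Summable fun m : ℤ => japaneseBracket m ^ t * ‖ah m‖)
    (hw : ∀ k : ℤ, ‖w k‖ ≤ M * japaneseBracket k ^ t) :
    ‖intAU ah w‖ ≤ 2 * π * (M * ∑' m : ℤ, japaneseBracket m ^ t * ‖ah m‖) := by
  have hneg : HasSum (fun k : ℤ => M * (japaneseBracket k ^ t * ‖ah (-k)‖))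
      (M * ∑' m : ℤ, japaneseBracket m ^ t * ‖ah m‖) := by
    have := ((Equiv.neg ℤ).hasSum_iff.2 hah.hasSum).mul_left M
    simpa [Function.comp_def, japaneseBracket_neg] using this
  rw [intAU, norm_mul, norm_mul, Complex.norm_real, Complex.norm_ofNat,
    Real.norm_of_nonneg Real.pi_pos.le]
  refine mul_le_mul_of_nonneg_left (tsum_of_norm_bounded hneg fun k => ?_) (by positivity)
  rw [norm_mul]
  nlinarith [hw k, norm_nonneg (ah (-k))]

lemma Jpow_apply (s : ℝ) (u : ℤ → ℂ) (n : ℤ) :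
    Jpow s u n = (japaneseBracket n ^ s : ℝ) * u n := by
  rw [Jpow, japaneseBracket_rpow]

lemma hNormSq_eq_tsum_sq (t : ℝ) (u : ℤ → ℂ) :
    hNormSq t u = 2 * π * ∑' k : ℤ, (japaneseBracket k ^ t * ‖u k‖) ^ 2 := by
  simp only [hNormSq, mul_pow, sq_japaneseBracket_rpow]

lemma commutator_eq {ah u : ℤ → ℂ} (s : ℝ) (n : ℤ) (h₁ : Summable fun k => ah (n - k) * u k)
    (h₂ : Summable fun k => ah (n - k) * Jpow s u k) :
    Jpow s (Gcoef ah u) n - Gcoef ah (Jpow s u) n =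
      ∑' k, ah (n - k) * ((japaneseBracket n ^ s - japaneseBracket k ^ s : ℝ) : ℂ) * u k
        - intAU ah u * ((japaneseBracket n ^ s : ℝ) * ah n) + intAU ah (Jpow s u) * ah n := by
  have hconv : (japaneseBracket n ^ s : ℝ) * aconv ah u n - aconv ah (Jpow s u) n =
      ∑' k, ah (n - k) * ((japaneseBracket n ^ s - japaneseBracket k ^ s : ℝ) : ℂ) * u k := by
    rw [aconv, aconv, ← tsum_mul_left, ← (h₁.mul_left _).tsum_sub h₂]
    congr 1 with k
    rw [Jpow_apply]
    push_cast
    ring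
  rw [Jpow_apply, Gcoef, Gcoef, ← hconv]
  ring

def commutatorKernelBound (s : ℝ) (ah : ℤ → ℂ) (m : ℤ) : ℝ :=
  |s| * (1 + √2 ^ |s - 1|) * (japaneseBracket m ^ (1 + |s - 1|) * ‖ah m‖)

def commutatorRankOneBound (s : ℝ) (ah : ℤ → ℂ) (n : ℤ) : ℝ :=
  2 * π * ((∑' m : ℤ, japaneseBracket m ^ (1 - s) * ‖ah m‖) * (japaneseBracket n ^ s * ‖ah n‖)
    + (∑' m : ℤ, japaneseBracket m ^ (1 : ℝ) * ‖ah m‖) * ‖ah n‖)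

lemma commutatorKernelBound_nonneg (s : ℝ) (ah : ℤ → ℂ) (m : ℤ) :
    0 ≤ commutatorKernelBound s ah m :=
  mul_nonneg (by positivity)
    (mul_nonneg (Real.rpow_pos_of_pos (japaneseBracket_pos _) _).le (norm_nonneg _))

lemma commutatorRankOneBound_nonneg (s : ℝ) (ah : ℤ → ℂ) (n : ℤ) :
    0 ≤ commutatorRankOneBound s ah n := by
  have h : ∀ t : ℝ, ∀ m : ℤ, 0 ≤ japaneseBracket m ^ t * ‖ah m‖ := fun t m =>
    mul_nonneg (Real.rpow_pos_of_pos (japaneseBracket_pos _) _).le (norm_nonneg _)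
  have h₁ : 0 ≤ ∑' m : ℤ, japaneseBracket m ^ (1 - s) * ‖ah m‖ := tsum_nonneg (h (1 - s))
  have h₂ : 0 ≤ ∑' m : ℤ, japaneseBracket m ^ (1 : ℝ) * ‖ah m‖ := tsum_nonneg (h 1)
  have h₃ := h s n
  unfold commutatorRankOneBound
  positivity

section Commutator

variable {ah u : ℤ → ℂ}

lemma IsRapidlyDecreasing.summable_commutatorKernelBound (hah : IsRapidlyDecreasing ah) (s : ℝ) :
    Summable (commutatorKernelBound s ah) :=
  (hah.summable_rpow_mul_norm _).mul_left _

lemma IsRapidlyDecreasing.summable_commutatorRankOneBound (hah : IsRapidlyDecreasing ah) (s : ℝ) :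
    Summable (commutatorRankOneBound s ah) := by
  have h₀ : Summable fun n : ℤ => ‖ah n‖ := by
    simpa using hah.summable_rpow_mul_norm 0
  exact (((hah.summable_rpow_mul_norm s).mul_left _).add (h₀.mul_left _)).mul_left _

lemma norm_tsum_commutator_symbol_le (hah : IsRapidlyDecreasing ah) {s M : ℝ}
    (hu : ∀ k : ℤ, japaneseBracket k ^ (s - 1) * ‖u k‖ ≤ M) (n : ℤ) :
    ‖∑' k, ah (n - k) * ((japaneseBracket n ^ s - japaneseBracket k ^ s : ℝ) : ℂ) * u k‖ ≤
      ∑' k, commutatorKernelBound s ah (n - k) * (japaneseBracket k ^ (s - 1) * ‖u k‖) := by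
  have hv0 : ∀ k : ℤ, 0 ≤ japaneseBracket k ^ (s - 1) * ‖u k‖ := fun k =>
    mul_nonneg (Real.rpow_pos_of_pos (japaneseBracket_pos _) _).le (norm_nonneg _)
  have hsum : Summable fun k =>
      commutatorKernelBound s ah (n - k) * (japaneseBracket k ^ (s - 1) * ‖u k‖) :=
    (((Equiv.subLeft n).summable_iff.2 (hah.summable_commutatorKernelBound s)).mul_right M
      ).of_nonneg_of_le (fun k => mul_nonneg (commutatorKernelBound_nonneg _ _ _) (hv0 k))
      fun k => mul_le_mul_of_nonneg_left (hu k) (commutatorKernelBound_nonneg _ _ _)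
  refine tsum_of_norm_bounded hsum.hasSum fun k => ?_
  rw [norm_mul, norm_mul, Complex.norm_real, Real.norm_eq_abs, commutatorKernelBound, Int.cast_sub]
  have := abs_japaneseBracket_rpow_sub_le s n k
  have := norm_nonneg (ah (n - k))
  have := norm_nonneg (u k)
  calc ‖ah (n - k)‖ * |japaneseBracket n ^ s - japaneseBracket k ^ s| * ‖u k‖
      ≤ ‖ah (n - k)‖ * (|s| * (1 + √2 ^ |s - 1|) * japaneseBracket (n - k) ^ (1 + |s - 1|) *
        japaneseBracket k ^ (s - 1)) * ‖u k‖ := by gcongr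
    _ = _ := by ring

lemma norm_commutator_le (hah : IsRapidlyDecreasing ah) {s M : ℝ}
    (hu : ∀ k : ℤ, japaneseBracket k ^ (s - 1) * ‖u k‖ ≤ M) (n : ℤ) :
    ‖Jpow s (Gcoef ah u) n - Gcoef ah (Jpow s u) n‖ ≤
      ∑' k, commutatorKernelBound s ah (n - k) * (japaneseBracket k ^ (s - 1) * ‖u k‖) +
        M * commutatorRankOneBound s ah n := by
  have hu₁ : ∀ k : ℤ, ‖u k‖ ≤ M * japaneseBracket k ^ (1 - s) := fun k => by
    have h := mul_le_mul_of_nonneg_right (hu k)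
      (Real.rpow_pos_of_pos (japaneseBracket_pos k) (1 - s)).le
    rwa [mul_comm _ ‖u k‖, mul_assoc, ← Real.rpow_add (japaneseBracket_pos k), sub_add_sub_cancel',
      sub_self, Real.rpow_zero, mul_one] at h
  have hu₂ : ∀ k : ℤ, ‖Jpow s u k‖ ≤ M * japaneseBracket k ^ (1 : ℝ) := fun k => by
    have h := mul_le_mul_of_nonneg_right (hu k) (Real.rpow_pos_of_pos (japaneseBracket_pos k) 1).le
    rw [mul_comm _ ‖u k‖, mul_assoc, ← Real.rpow_add (japaneseBracket_pos k), sub_add_cancel] at h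
    rw [Jpow_apply, norm_mul, Complex.norm_real,
      Real.norm_of_nonneg (Real.rpow_pos_of_pos (japaneseBracket_pos k) s).le]
    linarith [mul_comm ‖u k‖ (japaneseBracket k ^ s)]
  rw [commutator_eq s n (hah.summable_conv hu₁ n) (hah.summable_conv hu₂ n)]
  have hD := norm_tsum_commutator_symbol_le hah hu n
  have hI₁ := norm_intAU_le (hah.summable_rpow_mul_norm _) hu₁
  have hI₂ := norm_intAU_le (hah.summable_rpow_mul_norm _) hu₂
  have hn := mul_nonneg (Real.rpow_pos_of_pos (japaneseBracket_pos n) s).le (norm_nonneg (ah n))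
  calc _ ≤ ‖∑' k, ah (n - k) * ((japaneseBracket n ^ s - japaneseBracket k ^ s : ℝ) : ℂ) * u k‖
          + ‖intAU ah u‖ * (japaneseBracket n ^ s * ‖ah n‖) + ‖intAU ah (Jpow s u)‖ * ‖ah n‖ := by
        refine (norm_add_le _ _).trans
          (add_le_add ((norm_sub_le _ _).trans_eq ?_) (norm_mul _ _).le)
        rw [norm_mul, norm_mul, Complex.norm_real,
          Real.norm_of_nonneg (Real.rpow_pos_of_pos (japaneseBracket_pos n) s).le]
    _ ≤ ∑' k, commutatorKernelBound s ah (n - k) * (japaneseBracket k ^ (s - 1) * ‖u k‖)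
          + 2 * π * (M * ∑' m : ℤ, japaneseBracket m ^ (1 - s) * ‖ah m‖) *
              (japaneseBracket n ^ s * ‖ah n‖)
          + 2 * π * (M * ∑' m : ℤ, japaneseBracket m ^ (1 : ℝ) * ‖ah m‖) * ‖ah n‖ := by
        gcongr
    _ = _ := by
        rw [commutatorRankOneBound]
        ring

end Commutator

theorem bessel_commutator_estimate_general (ah : ℤ → ℂ)
    (hsmooth : ∀ m : ℕ, ∃ Cm : ℝ, 0 < Cm ∧ ∀ l : ℤ,
      ‖ah l‖ ≤ Cm * (1 + (l : ℝ) ^ 2) ^ (-(m : ℝ) / 2))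
    (s : ℝ) :
    ∃ C : ℝ, 0 < C ∧ ∀ u : ℤ → ℂ,
      Summable (fun k : ℤ => (1 + (k : ℝ) ^ 2) ^ (s - 1) * ‖u k‖ ^ 2) →
      hNormSq 0 (fun n => Jpow s (Gcoef ah u) n - Gcoef ah (Jpow s u) n)
        ≤ C ^ 2 * hNormSq (s - 1) u := by
  have hah : IsRapidlyDecreasing ah := hsmooth
  set B := ∑' m, commutatorKernelBound s ah m
  set R := ∑' n, commutatorRankOneBound s ah n
  have hB : 0 ≤ B := tsum_nonneg (commutatorKernelBound_nonneg s ah)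
  have hR : 0 ≤ R := tsum_nonneg (commutatorRankOneBound_nonneg s ah)
  refine ⟨2 * (B + R + 1), by positivity, fun u hu => ?_⟩
  set v : ℤ → ℝ := fun k => japaneseBracket k ^ (s - 1) * ‖u k‖
  have hv0 : ∀ k, 0 ≤ v k := fun k =>
    mul_nonneg (Real.rpow_pos_of_pos (japaneseBracket_pos _) _).le (norm_nonneg _)
  have hv : Summable fun k => v k ^ 2 := by
    simpa only [v, mul_pow, sq_japaneseBracket_rpow] using hu
  have hvle : ∀ k, v k ≤ √(∑' k, v k ^ 2) := fun k =>
    Real.le_sqrt_of_sq_le (hv.le_tsum k fun j _ => sq_nonneg (v j))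
  have key := tsum_sq_le_of_le_conv_add (commutatorKernelBound_nonneg s ah) hv0
    (commutatorRankOneBound_nonneg s ah) (hah.summable_commutatorKernelBound s) hv
    (hah.summable_commutatorRankOneBound s) (fun n => norm_nonneg _)
    (norm_commutator_le hah hvle)
  rw [hNormSq_eq_tsum_sq, hNormSq_eq_tsum_sq]
  simp only [Real.rpow_zero, one_mul]
  have hV : 0 ≤ ∑' k, v k ^ 2 := tsum_nonneg fun k => sq_nonneg _
  calc 2 * π * ∑' n, ‖Jpow s (Gcoef ah u) n - Gcoef ah (Jpow s u) n‖ ^ 2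
      ≤ 2 * π * (2 * (B ^ 2 + R ^ 2) * ∑' k, v k ^ 2) := by gcongr
    _ ≤ (2 * (B + R + 1)) ^ 2 * (2 * π * ∑' k, v k ^ 2) := by
        have : 2 * (B ^ 2 + R ^ 2) ≤ (2 * (B + R + 1)) ^ 2 := by nlinarith
        nlinarith [Real.pi_pos, mul_le_mul_of_nonneg_right this hV]

/-- **Commutator smoothing estimate.**  For `a ∈ C^∞(𝕋)` with `∫_𝕋 a = 1`
(given through its rapidly decaying Fourier coefficients `ah`) and
`G u = a(u - ∫ a u)`, the commutator `[(1-∂_x²)^{s/2}, G]` is bounded from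
`H^{s-1}(𝕋)` to `L²(𝕋)`:  `‖[(1-∂_x²)^{s/2}, G]u‖_{L²} ≤ C ‖u‖_{H^{s-1}}`. -/
theorem bessel_commutator_estimate (ah : ℤ → ℂ)
    (hsmooth : ∀ m : ℕ, ∃ Cm : ℝ, 0 < Cm ∧ ∀ l : ℤ,
      ‖ah l‖ ≤ Cm * (1 + (l : ℝ) ^ 2) ^ (-(m : ℝ) / 2))
    (hmean : 2 * (π : ℂ) * ah 0 = 1) (s : ℝ) :
    ∃ C : ℝ, 0 < C ∧ ∀ u : ℤ → ℂ,
      Summable (fun k : ℤ => (1 + (k : ℝ) ^ 2) ^ (s - 1) * ‖u k‖ ^ 2) →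
      hNormSq 0 (fun n => Jpow s (Gcoef ah u) n - Gcoef ah (Jpow s u) n)
        ≤ C ^ 2 * hNormSq (s - 1) u :=
  bessel_commutator_estimate_general ah hsmooth s
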